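/- arXiv:1409.4276 — 2 statements merged into one kernel-verified Lean document; each statement's English description precedes it below -/
import Mathlib

section
/- There exist a label set N with |N| = 5 and a cost function C on the quartet topologies of N such that every ternary tree T on N satisfies S(T) ≤ 4/5. In particular, the witness N = {u,v,w,x,y} with C(uv|wx) = 1, C(uw|vx) = C(ux|vw) = 0, C(xy|uv) = C(wy|uv) = C(uy|wx) = C(vy|wx) = 0, and C(ab|cd) = 1 for all remaining quartet topologies ab|cd, satisfies M = 5, m = 0, and C_T ≥ 1 for every ternary tree T on N, hence S(T) = (5 − C_T)/5 ≤ 4/5. -/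
/-- A ternary tree on a label set `N`: a finite undirected tree in which every
vertex has degree 1 or 3, together with a bijective labeling of the degree-1
vertices (leaves) by the elements of `N`. -/
structure TernaryTree (N : Type) where
  V : Type
  [fintypeV : Fintype V]
  [decEqV : DecidableEq V]
  G : SimpleGraph V
  [decAdj : DecidableRel G.Adj]
  isTree : G.IsTree
  deg13 : ∀ v : V, G.degree v = 1 ∨ G.degree v = 3
  leaf : N → V
  leaf_inj : Function.Injective leaf
  leaf_deg : ∀ x : N, G.degree (leaf x) = 1
  leaf_surj : ∀ v : V, G.degree v = 1 → ∃ x : N, leaf x = v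

attribute [instance] TernaryTree.fintypeV TernaryTree.decEqV TernaryTree.decAdj

/-- `T` is consistent with (embeds) the quartet topology `uv|wx`: the unique path
from leaf `u` to leaf `v` is vertex-disjoint from the unique path from leaf `w`
to leaf `x`. -/
def TernaryTree.Consistent {N : Type} (T : TernaryTree N) (u v w x : N) : Prop :=
  ∃ (p : T.G.Walk (T.leaf u) (T.leaf v)) (q : T.G.Walk (T.leaf w) (T.leaf x)),
    p.IsPath ∧ q.IsPath ∧ ∀ a, a ∈ p.support → a ∉ q.support

/-- A quartet topology on `N`: a partition of a 4-element subset of `N`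
into two unordered pairs, encoded as an element of `Sym2 (Sym2 N)`. -/
def IsQuartetTopology {N : Type} (q : Sym2 (Sym2 N)) : Prop :=
  ∃ u v w x : N, u ≠ v ∧ u ≠ w ∧ u ≠ x ∧ v ≠ w ∧ v ≠ x ∧ w ≠ x ∧
    q = s(s(u, v), s(w, x))

/-- `QT T` is the set of quartet topologies embedded in the ternary tree `T`. -/
def TernaryTree.QT {N : Type} (T : TernaryTree N) : Set (Sym2 (Sym2 N)) :=
  {q | ∃ u v w x : N, u ≠ v ∧ u ≠ w ∧ u ≠ x ∧ v ≠ w ∧ v ≠ x ∧ w ≠ x ∧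
        q = s(s(u, v), s(w, x)) ∧ T.Consistent u v w x}

/-- `q` is one of the three quartet topologies of the 4-element set `S`. -/
def IsTopologyOn {N : Type} [DecidableEq N] (q : Sym2 (Sym2 N)) (S : Finset N) : Prop :=
  ∃ u v w x : N, u ≠ v ∧ u ≠ w ∧ u ≠ x ∧ v ≠ w ∧ v ≠ x ∧ w ≠ x ∧
    ({u, v, w, x} : Finset N) = S ∧ q = s(s(u, v), s(w, x))

/-- The cost `C_T` of a ternary tree `T` under the cost function `C`: the sum,
over all quartets, of the cost of the unique topology of that quartet that is
embedded in `T`, i.e. the sum of `C` over the set `Q_T` of embedded quartet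
topologies. -/
noncomputable def TernaryTree.cost {N : Type} [Fintype N]
    (T : TernaryTree N) (C : Sym2 (Sym2 N) → ℝ) : ℝ :=
  ∑ᶠ q ∈ T.QT, C q

/-- `m`: the sum, over all quartets, of the minimal cost among the three
topologies of the quartet. -/
noncomputable def minTotal {N : Type} [Fintype N] [DecidableEq N]
    (C : Sym2 (Sym2 N) → ℝ) : ℝ :=
  ∑ S ∈ Finset.powersetCard 4 (Finset.univ : Finset N),
    sInf (C '' {q | IsTopologyOn q S})

/-- `M`: the sum, over all quartets, of the maximal cost among the three
topologies of the quartet. -/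
noncomputable def maxTotal {N : Type} [Fintype N] [DecidableEq N]
    (C : Sym2 (Sym2 N) → ℝ) : ℝ :=
  ∑ S ∈ Finset.powersetCard 4 (Finset.univ : Finset N),
    sSup (C '' {q | IsTopologyOn q S})

/-!
Two paths `a – b` and `c – d` between distinct leaves of a tree with degrees at most `3` either
are disjoint or can be rerouted: let `s` and `t` be the first and the last vertex of the `a – b`
path on the `c – d` path. If `s = t`, the vertex `s` has two neighbours on each path, four in
all, which is impossible. Otherwise, following the `c – d` path between `s` and `t` splices the
two paths into disjoint `a – c`, `b – d` paths or disjoint `a – d`, `b – c` paths.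
So every quartet has an embedded topology.

In the witness every quartet has topologies of cost `0` and of cost `1`, hence `M = 5` and
`m = 0`. A tree of cost `0` would embed `04|23` and `14|23`; since the tree has only one path
from `2` to `3`, and the paths from `4` to `0` and to `1` both avoid it, it would also embed
`01|23`, which costs `1`.
-/

theorem List.nodup_four_iff {α : Type*} {u v w x : α} :
    [u, v, w, x].Nodup ↔ u ≠ v ∧ u ≠ w ∧ u ≠ x ∧ v ≠ w ∧ v ≠ x ∧ w ≠ x := by
  simp only [List.nodup_cons, List.mem_cons, List.not_mem_nil, List.nodup_nil, or_false, not_or]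
  tauto

namespace SimpleGraph

variable {V : Type*} {G : SimpleGraph V}

def HasDisjointWalks (G : SimpleGraph V) (a b c d : V) : Prop :=
  ∃ (p : G.Walk a b) (q : G.Walk c d), p.support.Disjoint q.support

theorem length_le_degree_of_nodup {s : V} [Fintype (G.neighborSet s)] {l : List V}
    (hl : l.Nodup) (hadj : ∀ n ∈ l, G.Adj s n) : l.length ≤ G.degree s := by
  classical
  rw [← card_neighborFinset_eq_degree, ← List.toFinset_card_of_nodup hl]
  exact Finset.card_le_card fun n hn =>
    (mem_neighborFinset _ _ _).2 (hadj n (List.mem_toFinset.1 hn))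

namespace Walk

variable {a b c d s t : V}

theorem penultimate_mem_support (p : G.Walk a b) : p.penultimate ∈ p.support :=
  p.getVert_mem_support _

theorem IsPath.exists_adj_ne_adj_of_mem_support {q : G.Walk c d} (hq : q.IsPath)
    (hs : s ∈ q.support) (hc : c ≠ s) (hd : s ≠ d) :
    ∃ m₁ ∈ q.support, ∃ m₂ ∈ q.support, m₁ ≠ m₂ ∧ G.Adj s m₁ ∧ G.Adj s m₂ := by
  obtain ⟨q₁, q₂, -, -, rfl⟩ := hq.mem_support_iff_exists_append.1 hs
  have h₁ : G.Adj s q₁.penultimate := (q₁.adj_penultimate (not_nil_of_ne hc)).symm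
  have h₂ : G.Adj s q₂.snd := q₂.adj_snd (not_nil_of_ne hd)
  refine ⟨q₁.penultimate, (mem_support_append_iff _ _).2 (.inl q₁.penultimate_mem_support),
    q₂.snd, (mem_support_append_iff _ _).2 (.inr (q₂.getVert_mem_support _)),
    hq.ne_of_mem_support_of_append h₂.ne.symm q₁.penultimate_mem_support
      (q₂.getVert_mem_support _), h₁, h₂⟩

theorem IsPath.eq_or_eq_of_degree_le_one [Fintype (G.neighborSet s)] {q : G.Walk c d}
    (hq : q.IsPath) (hs : s ∈ q.support) (hdeg : G.degree s ≤ 1) : s = c ∨ s = d := by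
  by_contra! h
  obtain ⟨m₁, -, m₂, -, hm, h₁, h₂⟩ := hq.exists_adj_ne_adj_of_mem_support hs h.1.symm h.2
  have := length_le_degree_of_nodup (G := G) (s := s) (l := [m₁, m₂]) (by simpa using hm)
    (by simp [h₁, h₂])
  simp only [List.length_cons, List.length_nil] at this
  omega

theorem four_le_degree_of_crossing [Fintype (G.neighborSet s)] {p : G.Walk a s} {r : G.Walk b s}
    {q : G.Walk c d} (hq : q.IsPath) (hs : s ∈ q.support) (ha : a ≠ s) (hb : b ≠ s)
    (hc : c ≠ s) (hd : s ≠ d) (hpr : ∀ v ∈ p.support, v ∈ r.support → v = s)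
    (hpq : ∀ v ∈ p.support, v ∈ q.support → v = s)
    (hrq : ∀ v ∈ r.support, v ∈ q.support → v = s) : 4 ≤ G.degree s := by
  obtain ⟨m₁, hm₁, m₂, hm₂, hm, h₁, h₂⟩ := hq.exists_adj_ne_adj_of_mem_support hs hc hd
  have hn₁ : G.Adj s p.penultimate := (p.adj_penultimate (not_nil_of_ne ha)).symm
  have hn₂ : G.Adj s r.penultimate := (r.adj_penultimate (not_nil_of_ne hb)).symm
  have hp₁ : p.penultimate ∉ q.support := fun h =>
    hn₁.ne (hpq _ p.penultimate_mem_support h).symm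
  have hr₁ : r.penultimate ∉ q.support := fun h =>
    hn₂.ne (hrq _ r.penultimate_mem_support h).symm
  have hpr₁ : p.penultimate ≠ r.penultimate := fun h =>
    hn₁.ne (hpr _ p.penultimate_mem_support (h ▸ r.penultimate_mem_support)).symm
  have hnodup : [p.penultimate, r.penultimate, m₁, m₂].Nodup := by
    refine List.nodup_four_iff.2 ⟨hpr₁, ?_, ?_, ?_, ?_, hm⟩ <;> rintro rfl <;> contradiction
  simpa using length_le_degree_of_nodup hnodup (by simp [h₁, h₂, hn₁, hn₂])

theorem hasDisjointWalks_of_crossing {p : G.Walk a s} {r : G.Walk b t} {q₁ : G.Walk c s}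
    {q₂ : G.Walk s d} (hq : (q₁.append q₂).IsPath) (hst : s ≠ t) (ht : t ∈ q₂.support)
    (hpr : p.support.Disjoint r.support) (hp : ∀ v ∈ p.support, v ∈ q₂.support → v = s)
    (hr : ∀ v ∈ r.support, v ∈ q₁.support → v = t) : G.HasDisjointWalks a c b d := by
  obtain ⟨q₂₁, q₂₂, -, -, rfl⟩ := hq.of_append_right.mem_support_iff_exists_append.1 ht
  have hs₂₂ : s ∉ q₂₂.support := fun h =>
    hq.of_append_right.ne_of_mem_support_of_append hst q₂₁.start_mem_support h rfl
  have hq₂₂ : ∀ {v}, v ∈ q₂₂.support → v ∈ (q₂₁.append q₂₂).support := fun hv =>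
    (mem_support_append_iff _ _).2 (.inr hv)
  refine ⟨p.append q₁.reverse, r.append q₂₂, fun v hv hv' => ?_⟩
  rw [mem_support_append_iff, support_reverse, List.mem_reverse] at hv
  rw [mem_support_append_iff] at hv'
  rcases hv with hvp | hvq₁ <;> rcases hv' with hvr | hvq₂₂
  · exact hpr hvp hvr
  · exact hs₂₂ (hp v hvp (hq₂₂ hvq₂₂) ▸ hvq₂₂)
  · obtain rfl := hr v hvr hvq₁
    exact hq.ne_of_mem_support_of_append hst.symm hvq₁
      ((mem_support_append_iff _ _).2 (.inl q₂₁.end_mem_support)) rfl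
  · exact hq.ne_of_mem_support_of_append (fun h => hs₂₂ (h ▸ hvq₂₂)) hvq₁ (hq₂₂ hvq₂₂) rfl

variable [DecidableEq V]

theorem exists_eq_append_forall_mem_support_imp_eq (p : G.Walk a b) (q : G.Walk c d)
    (h : ¬ p.support.Disjoint q.support) :
    ∃ s ∈ q.support, ∃ (p₁ : G.Walk a s) (p₂ : G.Walk s b), p = p₁.append p₂ ∧
      ∀ v ∈ p₁.support, v ∈ q.support → v = s := by
  have hne : {x ∈ q.support.toFinset | x ∈ p.support}.Nonempty := by
    by_contra hempty
    exact h fun v hvp hvq => hempty ⟨v, Finset.mem_filter.2 ⟨List.mem_toFinset.2 hvq, hvp⟩⟩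
  obtain ⟨s, hsq, hsp, hfirst⟩ := p.exists_mem_support_forall_mem_support_imp_eq _ hne
  exact ⟨s, List.mem_toFinset.1 hsq, _, _, (p.take_spec hsp).symm,
    fun v hv hvq => hfirst v (List.mem_toFinset.2 hvq) hv⟩

theorem exists_walk_subset_forall_mem_support_imp_eq (p : G.Walk a b) (q : G.Walk c d)
    (h : ¬ p.support.Disjoint q.support) :
    ∃ t ∈ q.support, ∃ r : G.Walk b t, r.support ⊆ p.support ∧
      ∀ v ∈ r.support, v ∈ q.support → v = t := by
  obtain ⟨t, htq, r, r', hp, hr⟩ := p.reverse.exists_eq_append_forall_mem_support_imp_eq q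
    fun hd => h fun v hvp hvq => hd (by simpa using hvp) hvq
  refine ⟨t, htq, r, fun v hv => ?_, hr⟩
  have : v ∈ p.reverse.support := hp ▸ (mem_support_append_iff r r').2 (.inl hv)
  simpa using this

end Walk

open Walk in
theorem Preconnected.hasDisjointWalks_of_degree_le_three [DecidableEq V] [G.LocallyFinite]
    (hG : G.Preconnected) (hdeg : ∀ v, G.degree v ≤ 3) {a b c d : V} (ha : G.degree a ≤ 1)
    (hb : G.degree b ≤ 1) (hc : G.degree c ≤ 1) (hd : G.degree d ≤ 1) (hac : a ≠ c) (had : a ≠ d)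
    (hbc : b ≠ c) (hbd : b ≠ d) :
    G.HasDisjointWalks a b c d ∨ G.HasDisjointWalks a c b d ∨ G.HasDisjointWalks a d b c := by
  obtain ⟨P, hP⟩ : ∃ P : G.Walk a b, P.IsPath := ⟨_, (hG a b).some.bypass_isPath⟩
  obtain ⟨Q, hQ⟩ : ∃ Q : G.Walk c d, Q.IsPath := ⟨_, (hG c d).some.bypass_isPath⟩
  by_cases hPQ : P.support.Disjoint Q.support
  · exact .inl ⟨P, Q, hPQ⟩
  obtain ⟨s, hsQ, P₁, P₂, rfl, hP₁⟩ := P.exists_eq_append_forall_mem_support_imp_eq Q hPQ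
  obtain ⟨t, htQ, B₁, hB₁P₂, hB₁⟩ := P₂.exists_walk_subset_forall_mem_support_imp_eq Q
    fun h => h P₂.start_mem_support hsQ
  have hP₁B₁ : ∀ v ∈ P₁.support, v ∈ B₁.support → v = s := fun v h₁ h₂ => by
    by_contra hne
    exact hP.ne_of_mem_support_of_append hne h₁ (hB₁P₂ h₂) rfl
  obtain ⟨Q₁, Q₂, -, -, rfl⟩ := hQ.mem_support_iff_exists_append.1 hsQ
  simp only [mem_support_append_iff] at hP₁ hB₁
  by_cases hst : s = t
  · subst hst
    have hsP : s ∈ (P₁.append P₂).support :=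
      (mem_support_append_iff _ _).2 (.inl P₁.end_mem_support)
    have hsa : a ≠ s := by rintro rfl; have := hQ.eq_or_eq_of_degree_le_one hsQ ha; tauto
    have hsb : b ≠ s := by rintro rfl; have := hQ.eq_or_eq_of_degree_le_one hsQ hb; tauto
    have hsc : c ≠ s := by rintro rfl; have := hP.eq_or_eq_of_degree_le_one hsP hc; tauto
    have hsd : s ≠ d := by rintro rfl; have := hP.eq_or_eq_of_degree_le_one hsP hd; tauto
    have := four_le_degree_of_crossing hQ hsQ hsa hsb hsc hsd hP₁B₁
      (fun v hv hvQ => hP₁ v hv ((mem_support_append_iff _ _).1 hvQ))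
      (fun v hv hvQ => hB₁ v hv ((mem_support_append_iff _ _).1 hvQ))
    exact absurd (hdeg s) (by omega)
  have hP₁B₁' : P₁.support.Disjoint B₁.support := fun v h₁ h₂ => by
    obtain rfl := hP₁B₁ v h₁ h₂
    exact hst (hB₁ _ h₂ ((mem_support_append_iff _ _).1 hsQ))
  rcases (mem_support_append_iff _ _).1 htQ with htQ₁ | htQ₂
  · refine .inr (.inr (hasDisjointWalks_of_crossing (q₁ := Q₂.reverse) (q₂ := Q₁.reverse)
      (reverse_append Q₁ Q₂ ▸ hQ.reverse) hst (by simpa using htQ₁) hP₁B₁' ?_ ?_))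
    · exact fun v hv hvQ => hP₁ v hv (.inl (by simpa using hvQ))
    · exact fun v hv hvQ => hB₁ v hv (.inr (by simpa using hvQ))
  · exact .inr (.inl (hasDisjointWalks_of_crossing hQ hst htQ₂ hP₁B₁'
      (fun v hv hvQ => hP₁ v hv (.inr hvQ)) (fun v hv hvQ => hB₁ v hv (.inl hvQ))))

theorem IsAcyclic.hasDisjointWalks_of_common_end [DecidableEq V] (hG : G.IsAcyclic)
    {a a' b c d : V} (h : G.HasDisjointWalks a d b c) (h' : G.HasDisjointWalks a' d b c) :
    G.HasDisjointWalks a a' b c := by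
  obtain ⟨p, q, hpq⟩ := h
  obtain ⟨p', q', hpq'⟩ := h'
  have hq : q.bypass = q'.bypass :=
    congrArg Subtype.val
      ((hG.subsingleton_path _ _).elim ⟨_, q.bypass_isPath⟩ ⟨_, q'.bypass_isPath⟩)
  refine ⟨p.append p'.reverse, q.bypass, fun v hv hvq => ?_⟩
  rcases (Walk.mem_support_append_iff _ _).1 hv with hv | hv
  · exact hpq hv (q.support_bypass_subset_support hvq)
  · rw [hq] at hvq
    exact hpq' (by simpa using hv) (q'.support_bypass_subset_support hvq)

end SimpleGraph

namespace TernaryTree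

variable {N : Type} (T : TernaryTree N)

theorem consistent_iff {u v w x : N} :
    T.Consistent u v w x ↔ T.G.HasDisjointWalks (T.leaf u) (T.leaf v) (T.leaf w) (T.leaf x) := by
  refine ⟨fun ⟨p, q, _, _, h⟩ => ⟨p, q, fun v hp hq => h v hp hq⟩, fun ⟨p, q, h⟩ => ?_⟩
  exact ⟨p.bypass, q.bypass, p.bypass_isPath, q.bypass_isPath, fun v hp hq =>
    h (p.support_bypass_subset_support hp) (q.support_bypass_subset_support hq)⟩

theorem consistent_or_consistent_or_consistent {a b c d : N} (hac : a ≠ c) (had : a ≠ d)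
    (hbc : b ≠ c) (hbd : b ≠ d) :
    T.Consistent a b c d ∨ T.Consistent a c b d ∨ T.Consistent a d b c := by
  simp only [consistent_iff]
  exact T.isTree.connected.preconnected.hasDisjointWalks_of_degree_le_three
    (fun v => by rcases T.deg13 v with h | h <;> omega) (T.leaf_deg a).le (T.leaf_deg b).le
    (T.leaf_deg c).le (T.leaf_deg d).le (T.leaf_inj.ne hac) (T.leaf_inj.ne had)
    (T.leaf_inj.ne hbc) (T.leaf_inj.ne hbd)

theorem consistent_of_common_end {a a' b c d : N} (h : T.Consistent a d b c)
    (h' : T.Consistent a' d b c) : T.Consistent a a' b c := by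
  rw [consistent_iff] at *
  exact T.isTree.isAcyclic.hasDisjointWalks_of_common_end h h'

theorem mk_mem_QT {u v w x : N} (huvwx : [u, v, w, x].Nodup) (h : T.Consistent u v w x) :
    s(s(u, v), s(w, x)) ∈ T.QT := by
  obtain ⟨huv, huw, hux, hvw, hvx, hwx⟩ := List.nodup_four_iff.1 huvwx
  exact ⟨u, v, w, x, huv, huw, hux, hvw, hvx, hwx, rfl, h⟩

theorem le_cost [Fintype N] {C : Sym2 (Sym2 N) → ℝ} (hC : ∀ q, 0 ≤ C q) {q : Sym2 (Sym2 N)}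
    (hq : q ∈ T.QT) : C q ≤ T.cost C := by
  have hfin : T.QT.Finite := Set.toFinite _
  rw [TernaryTree.cost, finsum_mem_eq_finite_toFinset_sum _ hfin]
  exact Finset.single_le_sum (fun q _ => hC q) (hfin.mem_toFinset.2 hq)

end TernaryTree

theorem isTopologyOn_mk {N : Type} [DecidableEq N] {u v w x : N} (huvwx : [u, v, w, x].Nodup) :
    IsTopologyOn s(s(u, v), s(w, x)) {u, v, w, x} := by
  obtain ⟨huv, huw, hux, hvw, hvx, hwx⟩ := List.nodup_four_iff.1 huvwx
  exact ⟨u, v, w, x, huv, huw, hux, hvw, hvx, hwx, rfl, rfl⟩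

section Totals

variable {N : Type} [Fintype N] [DecidableEq N] {C : Sym2 (Sym2 N) → ℝ}

theorem maxTotal_eq_choose (hC : ∀ q, C q ≤ 1)
    (h : ∀ S ∈ Finset.powersetCard 4 Finset.univ, ∃ q, IsTopologyOn q S ∧ C q = 1) :
    maxTotal C = (Fintype.card N).choose 4 := by
  have hmax : ∀ S ∈ Finset.powersetCard 4 Finset.univ, sSup (C '' {q | IsTopologyOn q S}) = 1 :=
    fun S hS => IsGreatest.csSup_eq ⟨h S hS, Set.forall_mem_image.2 fun q _ => hC q⟩
  rw [maxTotal, Finset.sum_congr rfl hmax]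
  simp

theorem minTotal_eq_zero (hC : ∀ q, 0 ≤ C q)
    (h : ∀ S ∈ Finset.powersetCard 4 Finset.univ, ∃ q, IsTopologyOn q S ∧ C q = 0) :
    minTotal C = 0 := by
  have hmin : ∀ S ∈ Finset.powersetCard 4 Finset.univ, sInf (C '' {q | IsTopologyOn q S}) = 0 :=
    fun S hS => IsLeast.csInf_eq ⟨h S hS, Set.forall_mem_image.2 fun q _ => hC q⟩
  rw [minTotal, Finset.sum_congr rfl hmin]
  simp

end Totals

/-- The labels `u, v, w, x, y` of the paper are `0, 1, 2, 3, 4`. -/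
def zeroCostTopologies : Finset (Sym2 (Sym2 (Fin 5))) :=
  {s(s(0, 2), s(1, 3)), s(s(0, 3), s(1, 2)), s(s(3, 4), s(0, 1)), s(s(2, 4), s(0, 1)),
    s(s(0, 4), s(2, 3)), s(s(1, 4), s(2, 3))}

def witnessCost (q : Sym2 (Sym2 (Fin 5))) : ℝ :=
  if q ∈ zeroCostTopologies then 0 else 1

theorem witnessCost_nonneg (q : Sym2 (Sym2 (Fin 5))) : 0 ≤ witnessCost q := by
  unfold witnessCost; split_ifs <;> norm_num

theorem witnessCost_le_one (q : Sym2 (Sym2 (Fin 5))) : witnessCost q ≤ 1 := by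
  unfold witnessCost; split_ifs <;> norm_num

theorem maxTotal_witnessCost : maxTotal witnessCost = 5 := by
  have hquartets : ∀ S ∈ Finset.powersetCard 4 (Finset.univ : Finset (Fin 5)),
      ∃ u v w x : Fin 5, [u, v, w, x].Nodup ∧ {u, v, w, x} = S ∧
        s(s(u, v), s(w, x)) ∉ zeroCostTopologies := by
    decide
  rw [maxTotal_eq_choose witnessCost_le_one]
  · simp
  intro S hS
  obtain ⟨u, v, w, x, huvwx, rfl, hq⟩ := hquartets S hS
  exact ⟨_, isTopologyOn_mk huvwx, if_neg hq⟩

theorem minTotal_witnessCost : minTotal witnessCost = 0 := by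
  have hquartets : ∀ S ∈ Finset.powersetCard 4 (Finset.univ : Finset (Fin 5)),
      ∃ u v w x : Fin 5, [u, v, w, x].Nodup ∧ {u, v, w, x} = S ∧
        s(s(u, v), s(w, x)) ∈ zeroCostTopologies := by
    decide
  refine minTotal_eq_zero witnessCost_nonneg fun S hS => ?_
  obtain ⟨u, v, w, x, huvwx, rfl, hq⟩ := hquartets S hS
  exact ⟨_, isTopologyOn_mk huvwx, if_pos hq⟩

theorem TernaryTree.exists_mem_QT_notMem_zeroCostTopologies (T : TernaryTree (Fin 5)) :
    ∃ q ∈ T.QT, q ∉ zeroCostTopologies := by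
  rcases T.consistent_or_consistent_or_consistent (a := 0) (b := 2) (c := 3) (d := 4)
    (by decide) (by decide) (by decide) (by decide) with h | h | h₀
  · exact ⟨_, T.mk_mem_QT (by decide) h, by decide⟩
  · exact ⟨_, T.mk_mem_QT (by decide) h, by decide⟩
  rcases T.consistent_or_consistent_or_consistent (a := 1) (b := 2) (c := 3) (d := 4)
    (by decide) (by decide) (by decide) (by decide) with h | h | h₁
  · exact ⟨_, T.mk_mem_QT (by decide) h, by decide⟩
  · exact ⟨_, T.mk_mem_QT (by decide) h, by decide⟩
  exact ⟨_, T.mk_mem_QT (by decide) (T.consistent_of_common_end h₀ h₁), by decide⟩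

theorem TernaryTree.one_le_cost_witnessCost (T : TernaryTree (Fin 5)) : 1 ≤ T.cost witnessCost := by
  obtain ⟨q, hq, hq₀⟩ := T.exists_mem_QT_notMem_zeroCostTopologies
  simpa [witnessCost, hq₀] using T.le_cost witnessCost_nonneg hq

/-- There are a label set `N` with `|N| = 5` and a cost function `C` on the
quartet topologies of `N` with `M = 5` and `m = 0` such that every ternary tree
`T` on `N` has cost `C_T ≥ 1`, and hence normalized tree benefit score
`S(T) = (M − C_T)/(M − m) ≤ 4/5`. -/
theorem exists_five_object_instance_score_le_four_fifths :
    ∃ (N : Type) (instF : Fintype N) (instD : DecidableEq N)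
      (C : Sym2 (Sym2 N) → ℝ),
      @Fintype.card N instF = 5 ∧
      @maxTotal N instF instD C = 5 ∧
      @minTotal N instF instD C = 0 ∧
      ∀ T : TernaryTree N,
        1 ≤ @TernaryTree.cost N instF T C ∧
        (@maxTotal N instF instD C - @TernaryTree.cost N instF T C) /
            (@maxTotal N instF instD C - @minTotal N instF instD C) ≤ 4 / 5 := by
  refine ⟨Fin 5, inferInstance, inferInstance, witnessCost, Fintype.card_fin 5,
    maxTotal_witnessCost, minTotal_witnessCost, fun T => ⟨T.one_le_cost_witnessCost, ?_⟩⟩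
  rw [maxTotal_witnessCost, minTotal_witnessCost, div_le_div_iff₀ (by norm_num) (by norm_num)]
  linarith [T.one_le_cost_witnessCost]
end

section
/- Let T be a ternary tree on a label set N with |N| = n ≥ 4, let d be a symmetric real-valued function on pairs of elements of N, and define the cost of each quartet topology by C(uv|wx) = d(u,v) + d(w,x). For each internal node p of T, deleting p splits T into three subtrees T_1, T_2, T_3 containing n_1, n_2, n_3 leaves respectively (n = n_1 + n_2 + n_3); define C(p) = Σ_{i=1}^{3} C(n_i, 2) · Σ_{u a leaf of T_j, v a leaf of T_k} d(u,v), where {i,j,k} = {1,2,3}. Then the tree cost satisfies C_T = Σ_{p internal node of T} C(p). -/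
/-- `a` and `b` lie in the same component of the forest obtained from `T` by
deleting the vertex `p`: there is a walk from `a` to `b` avoiding `p`. -/
def TernaryTree.ConnAvoiding {N : Type} (T : TernaryTree N) (p a b : T.V) : Prop :=
  ∃ w : T.G.Walk a b, p ∉ w.support

/-!
Each embedded topology `ab|wx` comes from eight orderings `(a, b, w, x)` of its leaves, and
`d(a,b) + d(w,x)` is symmetric under exchanging the two pairs, so `C_T` is a quarter of the sum
of `d(a,b)` over the ordered quartets of distinct leaves with `ab|wx` embedded.

Such an ordered quartet is attached to exactly one internal node `p`, the one separating `a`,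
`b` and `{w, x}` into different components of `T - p`. This `p` is the median of `a`, `b`, `w`,
the only vertex on all three paths between them, and it is internal because leaves lie on paths
only as endpoints. Conversely, if an internal node separates `a` from `b` and both `w` and `x`
from `a` and `b`, then its degree 3 forces `w` and `x` into one component, so `ab|wx` is
embedded. Grouping the ordered quartets by this node, the ordered pairs `(w, x)` in the third
component number `2 · C(n_k, 2)`, which gives the node cost.
-/

namespace SimpleGraph

variable {V : Type*} {G : SimpleGraph V}

lemma Walk.exists_walk_to_first_mem {u v : V} (W : G.Walk u v) {S : Set V} (hv : v ∈ S) :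
    ∃ y ∈ S, ∃ q : G.Walk u y, ∀ z ∈ q.support, z ∈ S → z = y := by
  induction W with
  | nil => exact ⟨_, hv, Walk.nil, by simp⟩
  | @cons u m v h q ih =>
    by_cases hu : u ∈ S
    · exact ⟨u, hu, Walk.nil, by simp⟩
    · obtain ⟨y, hy, q', hq'⟩ := ih hv
      refine ⟨y, hy, Walk.cons h q', ?_⟩
      rintro z hz hzS
      rcases List.mem_cons.1 (Walk.support_cons h q' ▸ hz) with rfl | hz
      exacts [absurd hzS hu, hq' z hz hzS]

lemma Walk.IsPath.append {u v w : V} {p : G.Walk u v} {q : G.Walk v w}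
    (hp : p.IsPath) (hq : q.IsPath) (h : ∀ z ∈ p.support, z ∈ q.support → z = v) :
    (p.append q).IsPath := by
  rw [Walk.isPath_def, Walk.support_append, List.nodup_append]
  refine ⟨hp.support_nodup, hq.support_nodup.sublist q.support.tail_sublist, ?_⟩
  rintro z hz _ hz' rfl
  have hzq : z ∈ q.support := List.mem_of_mem_tail hz'
  obtain rfl := h z hz hzq
  have hnd := hq.support_nodup
  rw [← Walk.cons_tail_support q] at hnd
  exact (List.nodup_cons.1 hnd).1 hz'

namespace IsTree

variable (hG : G.IsTree)

noncomputable def path (u v : V) : G.Walk u v :=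
  (hG.existsUnique_path u v).exists.choose

lemma isPath_path (u v : V) : (hG.path u v).IsPath :=
  (hG.existsUnique_path u v).exists.choose_spec

variable {hG}

lemma eq_path {u v : V} {p : G.Walk u v} (hp : p.IsPath) : p = hG.path u v :=
  (hG.existsUnique_path u v).unique hp (hG.isPath_path u v)

lemma support_path_self (u : V) : (hG.path u u).support = [u] := by
  rw [← eq_path (Walk.IsPath.nil (u := u))]; rfl

lemma mem_path_comm {z u v : V} :
    z ∈ (hG.path u v).support ↔ z ∈ (hG.path v u).support := by
  rw [← eq_path (hG.isPath_path v u).reverse, Walk.support_reverse, List.mem_reverse]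

lemma path_eq_append {u v y : V} (hy : y ∈ (hG.path u v).support) :
    hG.path u v = (hG.path u y).append (hG.path y v) := by
  obtain ⟨q, r, hq, hr, h⟩ := (hG.isPath_path u v).mem_support_iff_exists_append.1 hy
  rw [h, eq_path hq, eq_path hr]

lemma mem_path_or_mem_path_of_mem_path {u v y z : V} (hy : y ∈ (hG.path u v).support)
    (hz : z ∈ (hG.path u v).support) :
    z ∈ (hG.path u y).support ∨ z ∈ (hG.path v y).support := by
  rw [path_eq_append hy, Walk.mem_support_append_iff] at hz
  exact hz.imp_right mem_path_comm.1

lemma eq_of_mem_path_of_mem_path {u v y z : V} (hy : y ∈ (hG.path u v).support)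
    (hu : z ∈ (hG.path u y).support) (hv : z ∈ (hG.path v y).support) : z = y := by
  by_contra hzy
  have hpath := path_eq_append hy ▸ hG.isPath_path u v
  exact hpath.ne_of_mem_support_of_append hzy hu (mem_path_comm.1 hv) rfl

lemma support_path_subset {u v y : V} (hy : y ∈ (hG.path u v).support) :
    (hG.path u y).support ⊆ (hG.path u v).support := by
  rw [path_eq_append hy, Walk.support_append]
  exact List.subset_append_left _ _

lemma mem_path_or_mem_path {u v w z : V} (hz : z ∈ (hG.path u w).support) :
    z ∈ (hG.path u v).support ∨ z ∈ (hG.path v w).support := by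
  classical
  rw [← eq_path ((hG.path u v).append (hG.path v w)).bypass_isPath] at hz
  exact (Walk.mem_support_append_iff _ _).1 (Walk.support_bypass_subset_support _ hz)

lemma exists_median (u v w : V) : ∃ m, m ∈ (hG.path u v).support ∧
    m ∈ (hG.path w u).support ∧ m ∈ (hG.path w v).support := by
  classical
  obtain ⟨m, hm, q, hq⟩ := (hG.path w u).exists_walk_to_first_mem
    (S := {z | z ∈ (hG.path u v).support}) (Walk.start_mem_support _)
  have hqm : ∀ z ∈ (hG.path w m).support, z ∈ (hG.path u v).support → z = m := by
    rw [← eq_path q.bypass_isPath]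
    exact fun z hz => hq z (q.support_bypass_subset_support hz)
  have through : ∀ x, (∀ z ∈ (hG.path m x).support, z ∈ (hG.path u v).support) →
      m ∈ (hG.path w x).support := fun x hx => by
    rw [← eq_path ((hG.isPath_path w m).append (hG.isPath_path m x)
      fun z hz hz' => hqm z hz (hx z hz'))]
    simp
  refine ⟨m, hm, through u fun z hz => ?_, through v fun z hz => ?_⟩
  · exact support_path_subset hm (mem_path_comm.1 hz)
  · exact mem_path_comm.1 (support_path_subset (mem_path_comm.1 hm) (mem_path_comm.1 hz))

lemma notMem_path_snd {p z : V} (hpz : p ≠ z) :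
    p ∉ (hG.path (hG.path p z).snd z).support := fun h =>
  (Walk.adj_snd (Walk.not_nil_of_ne hpz)).ne <| eq_of_mem_path_of_mem_path
    ((hG.path p z).getVert_mem_support 1) (Walk.start_mem_support _) (mem_path_comm.1 h)

lemma degree_ne_one_of_mem_path {u v y : V} [Fintype (G.neighborSet y)]
    (hy : y ∈ (hG.path u v).support) (hu : y ≠ u) (hv : y ≠ v) : G.degree y ≠ 1 := by
  intro h1
  obtain ⟨n, -, hn⟩ := degree_eq_one_iff_existsUnique_adj.1 h1
  have hsnd : ∀ {x}, y ≠ x → (hG.path y x).snd = n := fun hx =>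
    hn _ (Walk.adj_snd (Walk.not_nil_of_ne hx))
  have hmem : ∀ {x}, y ≠ x → n ∈ (hG.path x y).support := fun hx =>
    mem_path_comm.1 (hsnd hx ▸ (hG.path y _).getVert_mem_support 1)
  exact (Walk.adj_snd (Walk.not_nil_of_ne hu)).ne
    ((hsnd hu).trans (eq_of_mem_path_of_mem_path hy (hmem hu) (hmem hv))).symm

lemma card_le_degree_of_forall_mem_path {p : V} [Fintype (G.neighborSet p)] {s : Finset V}
    (hp : p ∉ s) (hs : ∀ u ∈ s, ∀ v ∈ s, u ≠ v → p ∈ (hG.path u v).support) :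
    s.card ≤ G.degree p := by
  have hne : ∀ {z}, z ∈ s → p ≠ z := fun hz h => hp (h ▸ hz)
  rw [← card_neighborFinset_eq_degree]
  -- distinct elements of `s` are reached from `p` through distinct neighbours
  refine Finset.card_le_card_of_injOn (fun z => (hG.path p z).snd)
    (fun z hz => (mem_neighborFinset _ _ _).2 (Walk.adj_snd (Walk.not_nil_of_ne (hne hz))))
    (fun u hu v hv huv => ?_)
  by_contra huv'
  rcases mem_path_or_mem_path (v := (hG.path p u).snd) (hs u hu v hv huv') with h | h
  · exact notMem_path_snd (hne hu) (mem_path_comm.1 h)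
  · exact notMem_path_snd (hne hv) ((show (hG.path p u).snd = _ from huv) ▸ h)

lemma notMem_path_of_median_notMem {a b w x p y : V}
    (hab : p ∈ (hG.path a b).support) (hwa : p ∈ (hG.path w a).support)
    (hwb : p ∈ (hG.path w b).support) (hwx : p ∉ (hG.path w x).support)
    (hy : y ∈ (hG.path a b).support) : y ∉ (hG.path w x).support := by
  intro hyx
  have side : ∀ c, y ∈ (hG.path c p).support → p ∈ (hG.path w c).support → False := by
    intro c hyc hwc
    have hcy : p ∉ (hG.path c y).support := fun h =>
      hwx (eq_of_mem_path_of_mem_path hyc h (Walk.start_mem_support _) ▸ hyx)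
    have hyw : p ∉ (hG.path y w).support := fun h =>
      hwx (support_path_subset hyx (mem_path_comm.1 h))
    rcases mem_path_or_mem_path (v := y) (mem_path_comm.1 hwc) with h | h
    exacts [hcy h, hyw h]
  rcases mem_path_or_mem_path_of_mem_path hab hy with h | h
  exacts [side a h hwa, side b h hwb]

lemma median_unique {u v w m m' : V}
    (huv : m ∈ (hG.path u v).support) (hwu : m ∈ (hG.path w u).support)
    (hwv : m ∈ (hG.path w v).support) (huv' : m' ∈ (hG.path u v).support)
    (hwu' : m' ∈ (hG.path w u).support) (hwv' : m' ∈ (hG.path w v).support) : m = m' := by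
  by_contra hne
  -- splitting the three paths at `m'` puts `m` on two of the paths `u–m'`, `v–m'`, `w–m'`
  have key : ∀ {x y}, m' ∈ (hG.path x y).support → m ∈ (hG.path x m').support →
      m ∈ (hG.path y m').support → False := fun h hx hy =>
    hne (eq_of_mem_path_of_mem_path h hx hy)
  rcases mem_path_or_mem_path_of_mem_path huv' huv with hu | hv
  · rcases mem_path_or_mem_path_of_mem_path hwv' hwv with hw | hv
    · exact key hwu' hw hu
    · exact key huv' hu hv
  · rcases mem_path_or_mem_path_of_mem_path hwu' hwu with hw | hu
    · exact key hwv' hw hv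
    · exact key huv' hu hv

end IsTree

end SimpleGraph

lemma Finset.card_offDiag_eq_two_mul_choose_two {α : Type*} [DecidableEq α] (s : Finset α) :
    s.offDiag.card = 2 * s.card.choose 2 := by
  rw [Finset.offDiag_card, Nat.choose_two_right, Nat.two_mul_div_two_of_even
    (Nat.even_mul_pred_self _), Nat.mul_sub_one]

def quartetTopology {N : Type} (t : N × N × N × N) : Sym2 (Sym2 N) :=
  s(s(t.1, t.2.1), s(t.2.2.1, t.2.2.2))

lemma quartetTopology_eq_iff {N : Type} {t : N × N × N × N} {u v w x : N} :
    quartetTopology t = quartetTopology (u, v, w, x) ↔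
      t = (u, v, w, x) ∨ t = (v, u, w, x) ∨ t = (u, v, x, w) ∨ t = (v, u, x, w) ∨
      t = (w, x, u, v) ∨ t = (x, w, u, v) ∨ t = (w, x, v, u) ∨ t = (x, w, v, u) := by
  obtain ⟨a, b, c, e⟩ := t
  simp only [quartetTopology, Sym2.eq_iff, Prod.mk.injEq]
  constructor
  · rintro (⟨⟨rfl, rfl⟩ | ⟨rfl, rfl⟩, ⟨rfl, rfl⟩ | ⟨rfl, rfl⟩⟩ |
      ⟨⟨rfl, rfl⟩ | ⟨rfl, rfl⟩, ⟨rfl, rfl⟩ | ⟨rfl, rfl⟩⟩) <;> simp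
  · rintro (h | h | h | h | h | h | h | h) <;> simp [h]

lemma card_filter_quartetTopology_eq_eight {N : Type} [Fintype N] [DecidableEq N]
    {u v w x : N} (huv : u ≠ v) (huw : u ≠ w) (hux : u ≠ x) (hvw : v ≠ w) (hvx : v ≠ x)
    (hwx : w ≠ x) :
    (Finset.univ.filter fun t => quartetTopology t = quartetTopology (u, v, w, x)).card = 8 := by
  have hfiber :
      (Finset.univ.filter fun t => quartetTopology t = quartetTopology (u, v, w, x)) =
      {(u, v, w, x), (v, u, w, x), (u, v, x, w), (v, u, x, w),
        (w, x, u, v), (x, w, u, v), (w, x, v, u), (x, w, v, u)} := by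
    ext t
    simp [quartetTopology_eq_iff]
  rw [hfiber]
  simp [Finset.card_insert_of_notMem, huv, huw, hux, hvw, hvx, hwx, huv.symm, huw.symm,
    hux.symm, hvw.symm, hvx.symm, hwx.symm]

namespace TernaryTree

open SimpleGraph Finset

open scoped Classical

variable {N : Type}

def Embeds (T : TernaryTree N) (a b w x : N) : Prop :=
  a ≠ b ∧ a ≠ w ∧ a ≠ x ∧ b ≠ w ∧ b ≠ x ∧ w ≠ x ∧ T.Consistent a b w x

def SplitsAt (T : TernaryTree N) (p : T.V) (a b w x : N) : Prop :=
  ¬ T.ConnAvoiding p (T.leaf a) (T.leaf b) ∧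
    (¬ T.ConnAvoiding p (T.leaf w) (T.leaf a) ∧ ¬ T.ConnAvoiding p (T.leaf w) (T.leaf b)) ∧
    (¬ T.ConnAvoiding p (T.leaf x) (T.leaf a) ∧ ¬ T.ConnAvoiding p (T.leaf x) (T.leaf b)) ∧
    w ≠ x

variable {T : TernaryTree N}

lemma not_connAvoiding_iff {p u v : T.V} :
    ¬ T.ConnAvoiding p u v ↔ p ∈ (T.isTree.path u v).support := by
  refine ⟨fun h => by_contra fun hp => h ⟨_, hp⟩, ?_⟩
  rintro hp ⟨W, hW⟩
  exact hW (W.support_bypass_subset_support (IsTree.eq_path W.bypass_isPath ▸ hp))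

lemma consistent_iff_s9 {a b w x : N} : T.Consistent a b w x ↔
    ∀ y ∈ (T.isTree.path (T.leaf a) (T.leaf b)).support,
      y ∉ (T.isTree.path (T.leaf w) (T.leaf x)).support := by
  refine ⟨?_, fun h => ⟨_, _, T.isTree.isPath_path _ _, T.isTree.isPath_path _ _, h⟩⟩
  rintro ⟨P, Q, hP, hQ, h⟩
  rwa [IsTree.eq_path hP, IsTree.eq_path hQ] at h

lemma Embeds.swap_left {a b w x : N} (h : T.Embeds a b w x) : T.Embeds b a w x := by
  obtain ⟨hab, haw, hax, hbw, hbx, hwx, P, Q, hP, hQ, hPQ⟩ := h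
  exact ⟨hab.symm, hbw, hbx, haw, hax, hwx, P.reverse, Q, hP.reverse, hQ, by simpa using hPQ⟩

lemma Embeds.swap_right {a b w x : N} (h : T.Embeds a b w x) : T.Embeds a b x w := by
  obtain ⟨hab, haw, hax, hbw, hbx, hwx, P, Q, hP, hQ, hPQ⟩ := h
  exact ⟨hab, hax, haw, hbx, hbw, hwx.symm, P, Q.reverse, hP, hQ.reverse, by simpa using hPQ⟩

lemma Embeds.swap {a b w x : N} (h : T.Embeds a b w x) : T.Embeds w x a b := by
  obtain ⟨hab, haw, hax, hbw, hbx, hwx, P, Q, hP, hQ, hPQ⟩ := h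
  exact ⟨hwx, haw.symm, hbw.symm, hax.symm, hbx.symm, hab, Q, P, hQ, hP,
    fun z hzQ hzP => hPQ z hzP hzQ⟩

lemma Embeds.of_quartetTopology_eq {a b w x : N} (h : T.Embeds a b w x) {t : N × N × N × N}
    (ht : quartetTopology t = quartetTopology (a, b, w, x)) :
    T.Embeds t.1 t.2.1 t.2.2.1 t.2.2.2 := by
  rcases quartetTopology_eq_iff.1 ht with rfl | rfl | rfl | rfl | rfl | rfl | rfl | rfl
  exacts [h, h.swap_left, h.swap_right, h.swap_left.swap_right, h.swap, h.swap.swap_left,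
    h.swap.swap_right, h.swap.swap_left.swap_right]

lemma sum_embeds_eq_eight_mul_cost [Fintype N] (f : Sym2 (Sym2 N) → ℝ) :
    ∑ t with T.Embeds t.1 t.2.1 t.2.2.1 t.2.2.2, f (quartetTopology t) = 8 * T.cost f := by
  set E := univ.filter fun t : N × N × N × N => T.Embeds t.1 t.2.1 t.2.2.1 t.2.2.2
  have hQT : T.QT = ↑(E.image quartetTopology) := by
    ext q
    simp only [QT, Embeds, E, coe_image, Set.mem_image, Set.mem_ofPred_eq, Prod.exists,
      quartetTopology]
    grind
  rw [TernaryTree.cost, hQT, finsum_mem_coe_finset, Finset.sum_comp, Finset.mul_sum]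
  refine sum_congr rfl fun q hq => ?_
  obtain ⟨⟨a, b, w, x⟩, hs, rfl⟩ := mem_image.1 hq
  have hE := (mem_filter.1 hs).2
  have hfiber : {t ∈ E | quartetTopology t = quartetTopology (a, b, w, x)} =
      univ.filter fun t => quartetTopology t = quartetTopology (a, b, w, x) := by
    rw [filter_filter]
    exact filter_congr fun t _ => and_iff_right_of_imp (hE.of_quartetTopology_eq ·)
  obtain ⟨hab, haw, hax, hbw, hbx, hwx, -⟩ := hE
  rw [hfiber, card_filter_quartetTopology_eq_eight hab haw hax hbw hbx hwx, nsmul_eq_mul]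
  norm_num

lemma cost_eq_sum_embeds [Fintype N] (d : N → N → ℝ) (C : Sym2 (Sym2 N) → ℝ)
    (hC : ∀ u v w x : N, C s(s(u, v), s(w, x)) = d u v + d w x) :
    T.cost C = 1 / 4 * ∑ a, ∑ b, ∑ w, ∑ x, if T.Embeds a b w x then d a b else 0 := by
  set E := univ.filter fun t : N × N × N × N => T.Embeds t.1 t.2.1 t.2.2.1 t.2.2.2
  have hswap : ∑ t ∈ E, d t.2.2.1 t.2.2.2 = ∑ t ∈ E, d t.1 t.2.1 :=
    let swap : N × N × N × N → N × N × N × N := fun t => (t.2.2.1, t.2.2.2, t.1, t.2.1)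
    sum_nbij' swap swap (fun t ht => by simpa [E] using (mem_filter.1 ht).2.swap)
      (fun t ht => by simpa [E] using (mem_filter.1 ht).2.swap)
      (fun _ _ => rfl) (fun _ _ => rfl) (fun _ _ => rfl)
  have h8 := sum_embeds_eq_eight_mul_cost (T := T) C
  simp only [quartetTopology, hC, sum_add_distrib] at h8
  have hE : ∑ t ∈ E, d t.1 t.2.1 =
      ∑ a, ∑ b, ∑ w, ∑ x, if T.Embeds a b w x then d a b else 0 := by
    rw [sum_filter]
    simp only [Fintype.sum_prod_type]
  linarith

lemma SplitsAt.eq {p p' : T.V} {a b w x : N} (h : T.SplitsAt p a b w x)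
    (h' : T.SplitsAt p' a b w x) : p = p' := by
  simp only [SplitsAt, not_connAvoiding_iff] at h h'
  exact IsTree.median_unique h.1 h.2.1.1 h.2.1.2 h'.1 h'.2.1.1 h'.2.1.2

lemma SplitsAt.embeds {p : T.V} {a b w x : N} (h3 : T.G.degree p = 3)
    (h : T.SplitsAt p a b w x) : T.Embeds a b w x := by
  have hpl : ∀ z, p ≠ T.leaf z := fun z hz => by
    rw [hz, T.leaf_deg] at h3
    omega
  have hne : ∀ {y z}, p ∈ (T.isTree.path (T.leaf y) (T.leaf z)).support → y ≠ z := by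
    rintro y z hp rfl
    rw [IsTree.support_path_self, List.mem_singleton] at hp
    exact hpl _ hp
  simp only [SplitsAt, not_connAvoiding_iff] at h
  obtain ⟨hab, ⟨hwa, hwb⟩, ⟨hxa, hxb⟩, hwx⟩ := h
  -- otherwise the four leaves would lie in four different components of `T - p`
  have hpwx : p ∉ (T.isTree.path (T.leaf w) (T.leaf x)).support := by
    intro hp
    have hcard := IsTree.card_le_degree_of_forall_mem_path (hG := T.isTree) (p := p)
      (s := {T.leaf a, T.leaf b, T.leaf w, T.leaf x}) (by simp [hpl]) (by
        simp only [mem_insert, mem_singleton]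
        rintro u (rfl | rfl | rfl | rfl) v (rfl | rfl | rfl | rfl) huv <;>
          first | exact absurd rfl huv | assumption | exact IsTree.mem_path_comm.1 ‹_›)
    rw [h3] at hcard
    simp [card_insert_of_notMem, T.leaf_inj.eq_iff, hne hab, (hne hwa).symm, (hne hxa).symm,
      (hne hwb).symm, (hne hxb).symm, hwx] at hcard
  exact ⟨hne hab, (hne hwa).symm, (hne hxa).symm, (hne hwb).symm, (hne hxb).symm, hwx,
    consistent_iff_s9.2 fun y hy => IsTree.notMem_path_of_median_notMem hab hwa hwb hpwx hy⟩

lemma Embeds.exists_splitsAt {a b w x : N} (h : T.Embeds a b w x) :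
    ∃ p, T.G.degree p = 3 ∧ T.SplitsAt p a b w x := by
  obtain ⟨hab, haw, hax, hbw, hbx, hwx, hc⟩ := h
  obtain ⟨p, hpab, hpwa, hpwb⟩ := T.isTree.exists_median (T.leaf a) (T.leaf b) (T.leaf w)
  have hpwx : p ∉ (T.isTree.path (T.leaf w) (T.leaf x)).support := consistent_iff_s9.1 hc p hpab
  have hx : ∀ {c}, p ∈ (T.isTree.path (T.leaf w) c).support →
      p ∈ (T.isTree.path (T.leaf x) c).support := fun hp =>
    (IsTree.mem_path_or_mem_path hp).resolve_left hpwx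
  have hpa : p ≠ T.leaf a := by
    rintro rfl
    exact IsTree.degree_ne_one_of_mem_path hpwb (T.leaf_inj.ne haw) (T.leaf_inj.ne hab)
      (T.leaf_deg a)
  have hpb : p ≠ T.leaf b := by
    rintro rfl
    exact IsTree.degree_ne_one_of_mem_path (IsTree.mem_path_comm.1 hpwa)
      (T.leaf_inj.ne hab.symm) (T.leaf_inj.ne hbw) (T.leaf_deg b)
  refine ⟨p, (T.deg13 p).resolve_left (IsTree.degree_ne_one_of_mem_path hpab hpa hpb), ?_⟩
  simp only [SplitsAt, not_connAvoiding_iff]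
  exact ⟨hpab, ⟨hpwa, hpwb⟩, ⟨hx hpwa, hx hpwb⟩, hwx⟩

lemma sum_ite_splitsAt [Fintype N] (a b w x : N) (c : ℝ) :
    ∑ p with T.G.degree p = 3, (if T.SplitsAt p a b w x then c else 0) =
      if T.Embeds a b w x then c else 0 := by
  split_ifs with h
  · obtain ⟨p, h3, hp⟩ := h.exists_splitsAt
    rw [sum_eq_single_of_mem p (mem_filter.2 ⟨mem_univ p, h3⟩)
      fun p' _ hne => if_neg fun hp' => hne (hp'.eq hp), if_pos hp]
  · exact sum_eq_zero fun p hp => if_neg fun hs => h (hs.embeds (mem_filter.1 hp).2)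

lemma ite_choose_two_mul_eq_sum_splitsAt [Fintype N] (d : N → N → ℝ) (p : T.V) (a b : N) :
    (if T.ConnAvoiding p (T.leaf a) (T.leaf b) then 0 else
      ((univ.filter fun z : N => ¬ T.ConnAvoiding p (T.leaf z) (T.leaf a) ∧
          ¬ T.ConnAvoiding p (T.leaf z) (T.leaf b)).card.choose 2 : ℝ) * d a b) =
      1 / 2 * ∑ w, ∑ x, if T.SplitsAt p a b w x then d a b else 0 := by
  by_cases hab : T.ConnAvoiding p (T.leaf a) (T.leaf b)
  · simp [SplitsAt, hab]
  · set Z := univ.filter fun z : N => ¬ T.ConnAvoiding p (T.leaf z) (T.leaf a) ∧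
      ¬ T.ConnAvoiding p (T.leaf z) (T.leaf b)
    have hZ : ∀ w x, T.SplitsAt p a b w x ↔ (w, x) ∈ Z.offDiag := by simp [SplitsAt, Z, hab]
    simp only [hZ, if_neg hab]
    rw [← Fintype.sum_prod_type' (f := fun w x => if (w, x) ∈ Z.offDiag then d a b else 0),
      sum_ite_mem, univ_inter, sum_const, nsmul_eq_mul, card_offDiag_eq_two_mul_choose_two]
    push_cast
    ring

end TernaryTree

open scoped Classical in
/-- The node cost `C(p)` appears as a sum over ordered pairs of leaves `a, b` in different
components of `T` minus `p` (hence the factor `1/2`), weighted by `C(n, 2)` for `n` the number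
of leaves in the third component. -/
theorem tree_cost_eq_sum_over_internal_nodes_general
    {N : Type} [Fintype N]
    (T : TernaryTree N)
    (d : N → N → ℝ)
    (C : Sym2 (Sym2 N) → ℝ)
    (hC : ∀ u v w x : N, C s(s(u, v), s(w, x)) = d u v + d w x) :
    T.cost C =
      ∑ p ∈ Finset.univ.filter (fun p : T.V => T.G.degree p = 3),
        (1 / 2 : ℝ) * ∑ a : N, ∑ b : N,
          if T.ConnAvoiding p (T.leaf a) (T.leaf b) then 0
          else
            ((Finset.univ.filter (fun z : N =>
                ¬ T.ConnAvoiding p (T.leaf z) (T.leaf a) ∧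
                ¬ T.ConnAvoiding p (T.leaf z) (T.leaf b))).card.choose 2 : ℝ)
              * d a b := by
  rw [TernaryTree.cost_eq_sum_embeds d C hC]
  simp only [TernaryTree.ite_choose_two_mul_eq_sum_splitsAt, ← Finset.mul_sum]
  simp only [Finset.sum_comm (s := Finset.univ.filter fun p : T.V => T.G.degree p = 3),
    TernaryTree.sum_ite_splitsAt]
  ring

open scoped Classical in
/-- When the cost of a quartet topology is `C(uv|wx) = d(u,v) + d(w,x)` for a
symmetric distance function `d`, the tree cost decomposes as a sum over the
internal nodes `p` of `T` of the node cost
`C(p) = Σᵢ C(nᵢ,2) · Σ_{a ∈ T_j, b ∈ T_k} d(a,b)`, where `T₁, T₂, T₃` are the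
three components of `T` with `p` deleted, and `nᵢ` is the number of leaves of
`Tᵢ`.  Here the node cost is expressed as a sum over the (ordered, hence the
factor 1/2) pairs of leaves `a, b` lying in two different components of
`T` minus `p`, weighted by `C(n,2)` where `n` counts the leaves in the third
component, the one containing neither `a` nor `b`. -/
theorem tree_cost_eq_sum_over_internal_nodes
    {N : Type} [Fintype N] [DecidableEq N] (h4 : 4 ≤ Fintype.card N)
    (T : TernaryTree N)
    (d : N → N → ℝ) (hd : ∀ a b : N, d a b = d b a)
    (C : Sym2 (Sym2 N) → ℝ)
    (hC : ∀ u v w x : N, C s(s(u, v), s(w, x)) = d u v + d w x) :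
    T.cost C =
      ∑ p ∈ Finset.univ.filter (fun p : T.V => T.G.degree p = 3),
        (1 / 2 : ℝ) * ∑ a : N, ∑ b : N,
          if T.ConnAvoiding p (T.leaf a) (T.leaf b) then 0
          else
            ((Finset.univ.filter (fun z : N =>
                ¬ T.ConnAvoiding p (T.leaf z) (T.leaf a) ∧
                ¬ T.ConnAvoiding p (T.leaf z) (T.leaf b))).card.choose 2 : ℝ)
              * d a b :=
  tree_cost_eq_sum_over_internal_nodes_general T d C hC
end
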